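/- arXiv:1412.5553 — 2 statements merged into one kernel-verified Lean document; each statement's English description precedes it below -/
import Mathlib

section
/- Let G be an irreducible rate matrix on the finite state space 𝒳 = {1,…,d} and let p(·), q(·) : [0,∞) → 𝒫(𝒳) be solutions of the linear forward equation r'(t) = r(t)G. Then for every t > 0, d/dt R(p(t)‖q(t)) = 0 if and only if p(t) = q(t). -/
open scoped BigOperators

noncomputable def relEnt {d : ℕ} (p q : Fin d → ℝ) : ℝ :=
  ∑ x, p x * Real.log (p x / q x)

def IsRateMatrix {d : ℕ} (G : Matrix (Fin d) (Fin d) ℝ) : Prop :=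
  (∀ x y, x ≠ y → 0 ≤ G x y) ∧ (∀ x, ∑ y, G x y = 0)

def IsIrreducibleRateMatrix {d : ℕ} (G : Matrix (Fin d) (Fin d) ℝ) : Prop :=
  ∀ x y : Fin d, x ≠ y → Relation.TransGen (fun a b => a ≠ b ∧ 0 < G a b) x y

def SolvesForwardEquation {d : ℕ} (G : Matrix (Fin d) (Fin d) ℝ)
    (p : ℝ → Fin d → ℝ) : Prop :=
  (∀ t : ℝ, 0 ≤ t → p t ∈ stdSimplex ℝ (Fin d)) ∧
  (∀ t : ℝ, 0 ≤ t → ∀ x, HasDerivAt (fun s => p s x) (∑ y, p t y * G y x) t)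

/-!
With `a = p / q`, the derivative of `R(p‖q)` along the forward equation is
`∑_{y,x} p_y G_{yx} (log u - u + 1)` with `u = a_x / a_y`; the terms
`∑_y p_y log a_y ∑_x G_{yx}` drop out because the rows of `G` sum to zero. Since
`log u ≤ u - 1`, with equality only at `u = 1`, every term is `≤ 0`, so the derivative vanishes
iff `a` is constant along each edge of the rate graph, i.e. (by irreducibility) constant,
i.e. `p = q`.
This needs `p(t), q(t) > 0`. For `C ≥ -G_{xx}`, `e^{Cs} p_x(s)` is nondecreasing, and strictly
increasing while some `y` with `G_{yx} > 0` has `p_y > 0`; so positivity spreads along edges.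
-/

open Finset Real

section Positivity

variable {d : ℕ} {G : Matrix (Fin d) (Fin d) ℝ}

lemma IsRateMatrix.single_le_add_sum_mul (hG : IsRateMatrix G) {r : Fin d → ℝ} (hr : 0 ≤ r)
    {C : ℝ} (hC : ∀ z, 0 ≤ C + G z z) {x y : Fin d} (hyx : y ≠ x) :
    r y * G y x ≤ C * r x + ∑ z, r z * G z x := by
  have hoff : ∀ z ∈ univ.erase x, 0 ≤ r z * G z x :=
    fun z hz => mul_nonneg (hr z) (hG.1 z x (ne_of_mem_erase hz))
  have hsingle : r y * G y x ≤ ∑ z ∈ univ.erase x, r z * G z x :=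
    single_le_sum hoff (mem_erase.2 ⟨hyx, mem_univ y⟩)
  rw [← add_sum_erase _ _ (mem_univ x)]
  nlinarith [mul_nonneg (hr x) (hC x)]

lemma IsRateMatrix.add_sum_mul_nonneg (hG : IsRateMatrix G) {r : Fin d → ℝ} (hr : 0 ≤ r)
    {C : ℝ} (hC : ∀ z, 0 ≤ C + G z z) (x : Fin d) :
    0 ≤ C * r x + ∑ z, r z * G z x := by
  have hoff : 0 ≤ ∑ z ∈ univ.erase x, r z * G z x :=
    sum_nonneg fun z hz => mul_nonneg (hr z) (hG.1 z x (ne_of_mem_erase hz))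
  rw [← add_sum_erase _ _ (mem_univ x)]
  nlinarith [mul_nonneg (hr x) (hC x)]

lemma exists_forall_add_diag_nonneg (G : Matrix (Fin d) (Fin d) ℝ) :
    ∃ C : ℝ, ∀ z, 0 ≤ C + G z z := by
  obtain ⟨C, hC⟩ := Finite.exists_le fun z => -G z z
  exact ⟨C, fun z => by linarith [hC z]⟩

namespace SolvesForwardEquation

variable {p : ℝ → Fin d → ℝ}

lemma nonneg (hp : SolvesForwardEquation G p) {t : ℝ} (ht : 0 ≤ t) : 0 ≤ p t :=
  (hp.1 t ht).1

lemma hasDerivAt_exp_mul (hp : SolvesForwardEquation G p) (C : ℝ) (x : Fin d) {t : ℝ}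
    (ht : 0 ≤ t) :
    HasDerivAt (fun s => exp (C * s) * p s x)
      (exp (C * t) * (C * p t x + ∑ y, p t y * G y x)) t := by
  have hexp : HasDerivAt (fun s => exp (C * s)) (exp (C * t) * C) t := by
    simpa using ((hasDerivAt_id t).const_mul C).exp
  exact (hexp.mul (hp.2 t ht x)).congr_deriv (by ring)

lemma monotoneOn_exp_mul (hG : IsRateMatrix G) (hp : SolvesForwardEquation G p) {C : ℝ}
    (hC : ∀ z, 0 ≤ C + G z z) (x : Fin d) :
    MonotoneOn (fun s => exp (C * s) * p s x) (Set.Ici 0) := by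
  refine monotoneOn_of_hasDerivWithinAt_nonneg (convex_Ici 0)
    (f' := fun s => exp (C * s) * (C * p s x + ∑ y, p s y * G y x))
    (fun s hs => (hp.hasDerivAt_exp_mul C x hs).continuousAt.continuousWithinAt)
    (fun s hs => ?_) (fun s hs => ?_)
  all_goals rw [interior_Ici] at hs
  · exact (hp.hasDerivAt_exp_mul C x hs.le).hasDerivWithinAt
  · exact mul_nonneg (exp_pos _).le (hG.add_sum_mul_nonneg (hp.nonneg hs.le) hC x)

lemma pos_of_pos_of_le (hG : IsRateMatrix G) (hp : SolvesForwardEquation G p) {x : Fin d}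
    {s u : ℝ} (hs : 0 ≤ s) (hsu : s ≤ u) (hpos : 0 < p s x) : 0 < p u x := by
  obtain ⟨C, hC⟩ := exists_forall_add_diag_nonneg G
  have hmono := hp.monotoneOn_exp_mul hG hC x
    (Set.mem_Ici.2 hs) (Set.mem_Ici.2 (hs.trans hsu)) hsu
  have : 0 < exp (C * u) * p u x := lt_of_lt_of_le (mul_pos (exp_pos _) hpos) hmono
  exact pos_of_mul_pos_right this (exp_pos _).le

lemma pos_of_pos_of_rate_pos (hG : IsRateMatrix G) (hp : SolvesForwardEquation G p)
    {x y : Fin d} (hyx : y ≠ x) (hGyx : 0 < G y x) {s u : ℝ} (hs : 0 ≤ s) (hsu : s < u)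
    (hpos : 0 < p s y) : 0 < p u x := by
  obtain ⟨C, hC⟩ := exists_forall_add_diag_nonneg G
  have hmono : StrictMonoOn (fun s => exp (C * s) * p s x) (Set.Icc s u) := by
    refine strictMonoOn_of_hasDerivWithinAt_pos (convex_Icc s u)
      (f' := fun v => exp (C * v) * (C * p v x + ∑ z, p v z * G z x))
      (fun v hv => (hp.hasDerivAt_exp_mul C x (hs.trans hv.1)).continuousAt.continuousWithinAt)
      (fun v hv => ?_) (fun v hv => ?_)
    all_goals rw [interior_Icc] at hv
    · exact (hp.hasDerivAt_exp_mul C x (hs.trans hv.1.le)).hasDerivWithinAt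
    · have hv0 : 0 ≤ v := hs.trans hv.1.le
      have hflow : 0 < p v y * G y x := mul_pos (hp.pos_of_pos_of_le hG hs hv.1.le hpos) hGyx
      exact mul_pos (exp_pos _)
        (hflow.trans_le (hG.single_le_add_sum_mul (hp.nonneg hv0) hC hyx))
  have hlt := hmono (Set.left_mem_Icc.2 hsu.le) (Set.right_mem_Icc.2 hsu.le) hsu
  have : 0 < exp (C * u) * p u x :=
    lt_of_le_of_lt (mul_nonneg (exp_pos _).le (hp.nonneg hs x)) hlt
  exact pos_of_mul_pos_right this (exp_pos _).le

lemma pos (hG : IsRateMatrix G) (hGirr : IsIrreducibleRateMatrix G)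
    (hp : SolvesForwardEquation G p) {t : ℝ} (ht : 0 < t) (x : Fin d) : 0 < p t x := by
  obtain ⟨x₀, hx₀⟩ : ∃ x₀, 0 < p 0 x₀ := by
    have hsum : ∑ z, (0 : Fin d → ℝ) z < ∑ z, p 0 z := by simp [(hp.1 0 le_rfl).2]
    obtain ⟨x₀, -, hx₀⟩ := exists_lt_of_sum_lt hsum
    exact ⟨x₀, hx₀⟩
  rcases eq_or_ne x₀ x with rfl | hne
  · exact hp.pos_of_pos_of_le hG le_rfl ht.le hx₀
  have hpath := hGirr x₀ x hne
  clear hne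
  induction hpath generalizing t with
  | single h => exact hp.pos_of_pos_of_rate_pos hG h.1 h.2 le_rfl ht hx₀
  | tail _ h ih =>
    exact hp.pos_of_pos_of_rate_pos hG h.1 h.2 (half_pos ht).le (half_lt_self ht)
      (ih (half_pos ht))

end SolvesForwardEquation

end Positivity

section Dissipation

variable {d : ℕ}

lemma hasDerivAt_relEnt {p q : ℝ → Fin d → ℝ} {p' q' : Fin d → ℝ} {t : ℝ}
    (hp : ∀ x, HasDerivAt (fun s => p s x) (p' x) t)
    (hq : ∀ x, HasDerivAt (fun s => q s x) (q' x) t)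
    (hp₀ : ∀ x, p t x ≠ 0) (hq₀ : ∀ x, q t x ≠ 0) :
    HasDerivAt (fun s => relEnt (p s) (q s))
      (∑ x, (p' x * log (p t x / q t x) + p' x - p t x / q t x * q' x)) t := by
  unfold relEnt
  refine HasDerivAt.fun_sum fun x _ => ?_
  have hlog := ((hp x).fun_div (hq x) (hq₀ x)).log (div_ne_zero (hp₀ x) (hq₀ x))
  refine ((hp x).mul hlog).congr_deriv ?_
  field_simp [hp₀ x, hq₀ x]
  ring

lemma sum_mul_log_add_sub_eq {G : Matrix (Fin d) (Fin d) ℝ} (hG : ∀ y, ∑ x, G y x = 0)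
    {p q a : Fin d → ℝ} (ha : ∀ x, a x ≠ 0) (hpqa : ∀ x, p x = q x * a x) :
    ∑ x, ((∑ y, p y * G y x) * log (a x) + ∑ y, p y * G y x - a x * ∑ y, q y * G y x) =
      ∑ y, ∑ x, p y * G y x * (log (a x / a y) - a x / a y + 1) := by
  have hterm : ∀ y x, p y * G y x * (log (a x / a y) - a x / a y + 1) =
      p y * G y x * log (a x) + p y * G y x - a x * (q y * G y x)
        - p y * log (a y) * G y x := by
    intro y x
    rw [log_div (ha x) (ha y), hpqa y]
    field_simp [ha y]
    ring
  have hcancel : ∑ x, ∑ y, p y * log (a y) * G y x = 0 := by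
    rw [sum_comm]
    exact sum_eq_zero fun y _ => by rw [← mul_sum, hG y, mul_zero]
  rw [sum_comm]
  simp only [hterm, sum_sub_distrib, sum_add_distrib, hcancel, sum_mul, mul_sum, sub_zero]

lemma log_sub_add_one_nonpos {u : ℝ} (hu : 0 < u) : log u - u + 1 ≤ 0 := by
  linarith [log_le_sub_one_of_pos hu]

lemma log_sub_add_one_eq_zero_iff {u : ℝ} (hu : 0 < u) : log u - u + 1 = 0 ↔ u = 1 := by
  refine ⟨fun h => by_contra fun hne => ?_, fun h => by simp [h]⟩
  linarith [log_lt_sub_one_of_pos hu hne]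

lemma IsRateMatrix.mul_log_sub_add_one_nonpos {G : Matrix (Fin d) (Fin d) ℝ}
    (hG : IsRateMatrix G) {r a : Fin d → ℝ} (hr : 0 ≤ r) (ha : ∀ x, 0 < a x) (y x : Fin d) :
    r y * G y x * (log (a x / a y) - a x / a y + 1) ≤ 0 := by
  rcases eq_or_ne y x with rfl | hyx
  · simp [div_self (ha y).ne']
  · exact mul_nonpos_of_nonneg_of_nonpos (mul_nonneg (hr y) (hG.1 y x hyx))
      (log_sub_add_one_nonpos (div_pos (ha x) (ha y)))

lemma eq_of_mul_log_sub_add_one_eq_zero {c : ℝ} (hc : 0 < c) {a b : ℝ} (ha : 0 < a)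
    (hb : 0 < b) (h : c * (log (a / b) - a / b + 1) = 0) : a = b := by
  rwa [mul_eq_zero, or_iff_right hc.ne', log_sub_add_one_eq_zero_iff (div_pos ha hb),
    div_eq_one_iff_eq hb.ne'] at h

end Dissipation

lemma IsIrreducibleRateMatrix.eq_of_forall_rate_pos {d : ℕ} {G : Matrix (Fin d) (Fin d) ℝ}
    (hG : IsIrreducibleRateMatrix G) {α : Type*} {f : Fin d → α}
    (hf : ∀ y x, y ≠ x → 0 < G y x → f y = f x) (x y : Fin d) : f x = f y := by
  rcases eq_or_ne x y with rfl | hne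
  · rfl
  have hpath := hG x y hne
  clear hne
  induction hpath with
  | single h => exact hf _ _ h.1 h.2
  | tail _ h ih => exact ih.trans (hf _ _ h.1 h.2)

lemma eq_of_forall_div_eq {d : ℕ} {p q : Fin d → ℝ} (hp : p ∈ stdSimplex ℝ (Fin d))
    (hq : q ∈ stdSimplex ℝ (Fin d)) (hq₀ : ∀ x, q x ≠ 0)
    (h : ∀ x y, p x / q x = p y / q y) : p = q := by
  funext x
  have hscale : ∀ y, p y = p x / q x * q y := fun y => by
    rw [h x y, div_mul_cancel₀ _ (hq₀ y)]
  have hone : p x / q x = 1 := by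
    have hsum : ∑ y, p y = ∑ y, p x / q x * q y := sum_congr rfl fun y _ => hscale y
    simpa [← mul_sum, hp.2, hq.2] using hsum.symm
  exact (div_eq_one_iff_eq (hq₀ x)).1 hone

theorem relative_entropy_derivative_zero_iff_general
    (d : ℕ) (G : Matrix (Fin d) (Fin d) ℝ)
    (hG : IsRateMatrix G) (hGirr : IsIrreducibleRateMatrix G)
    (p q : ℝ → Fin d → ℝ)
    (hp : SolvesForwardEquation G p) (hq : SolvesForwardEquation G q) :
    ∀ t : ℝ, 0 < t → ∀ D : ℝ,
      HasDerivAt (fun s => relEnt (p s) (q s)) D t →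
      (D = 0 ↔ p t = q t) := by
  intro t ht D hD
  have hp_pos := hp.pos hG hGirr ht
  have hq_pos := hq.pos hG hGirr ht
  set a : Fin d → ℝ := fun x => p t x / q t x
  have ha_pos : ∀ x, 0 < a x := fun x => div_pos (hp_pos x) (hq_pos x)
  have hD_eq : D = ∑ y, ∑ x, p t y * G y x * (log (a x / a y) - a x / a y + 1) := by
    rw [hD.unique (hasDerivAt_relEnt (hp.2 t ht.le) (hq.2 t ht.le) (fun x => (hp_pos x).ne')
      (fun x => (hq_pos x).ne'))]
    exact sum_mul_log_add_sub_eq hG.2 (fun x => (ha_pos x).ne')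
      (fun x => (mul_div_cancel₀ _ (hq_pos x).ne').symm)
  have hterm_nonpos := hG.mul_log_sub_add_one_nonpos (hp.nonneg ht.le) ha_pos
  constructor
  · intro hD0
    rw [hD0, eq_comm, sum_eq_zero_iff_of_nonpos fun y _ => sum_nonpos fun x _ =>
      hterm_nonpos y x] at hD_eq
    refine eq_of_forall_div_eq (hp.1 t ht.le) (hq.1 t ht.le) (fun x => (hq_pos x).ne')
      (hGirr.eq_of_forall_rate_pos fun y x _ hGyx => ?_)
    have hterm_zero := (sum_eq_zero_iff_of_nonpos fun x _ => hterm_nonpos y x).1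
      (hD_eq y (mem_univ y)) x (mem_univ x)
    exact (eq_of_mul_log_sub_add_one_eq_zero (mul_pos (hp_pos y) hGyx) (ha_pos x) (ha_pos y)
      hterm_zero).symm
  · intro hpq
    simp [hD_eq, a, hpq, div_self (hq_pos _).ne']

/-- For an irreducible rate matrix `G` and two solutions of the linear
forward equation, at any time `t > 0` the derivative of
`t ↦ R(p(t)‖q(t))` vanishes if and only if `p(t) = q(t)`. -/
theorem relative_entropy_derivative_zero_iff
    (d : ℕ) (hd : 2 ≤ d) (G : Matrix (Fin d) (Fin d) ℝ)
    (hG : IsRateMatrix G) (hGirr : IsIrreducibleRateMatrix G)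
    (p q : ℝ → Fin d → ℝ)
    (hp : SolvesForwardEquation G p) (hq : SolvesForwardEquation G q) :
    ∀ t : ℝ, 0 < t → ∀ D : ℝ,
      HasDerivAt (fun s => relEnt (p s) (q s)) D t →
      (D = 0 ↔ p t = q t) :=
  relative_entropy_derivative_zero_iff_general d G hG hGirr p q hp hq
end

section
/- Let K : 𝒳 × ℝ^d → ℝ with K(x,·) twice continuously differentiable for each x ∈ 𝒳, let U_N(x) = Σ_{i=1}^N K(x_i, r^N(x)), and let π_N be the Gibbs measure on 𝒳^N given by π_N(x) = Z_N^{-1} exp(−U_N(x)), Z_N = Σ_{x∈𝒳^N} exp(−U_N(x)). For N ∈ ℕ define F̃_N : 𝒫(𝒳) → [0,∞] by F̃_N(p) = (1/N) R(⊗^N p ‖ π_N). Then for every p ∈ 𝒫(𝒳), lim_{N→∞} F̃_N(p) = Σ_{x∈𝒳} (K(x,p) + log p_x) p_x − C, where C = inf_{q∈𝒫(𝒳)} { Σ_{x∈𝒳} q_x log q_x + Σ_{x∈𝒳} K(x,q) q_x } is a finite constant independent of p. -/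
open scoped BigOperators
open Filter

/-- Empirical measure of a configuration `x ∈ 𝒳^N`. -/
noncomputable def empMeasure {d N : ℕ} (x : Fin N → Fin d) : Fin d → ℝ :=
  fun y => (1 / (N : ℝ)) * ∑ i, if x i = y then 1 else 0

/-- The `N`-particle energy `U_N(x) = ∑_i K(x_i, r^N(x))`. -/
noncomputable def energyU {d N : ℕ} (K : Fin d → (Fin d → ℝ) → ℝ)
    (x : Fin N → Fin d) : ℝ :=
  ∑ i, K (x i) (empMeasure x)

/-- The Gibbs measure `π_N(x) = Z_N⁻¹ exp(−U_N(x))` on `𝒳^N`. -/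
noncomputable def gibbsMeasure {d N : ℕ} (K : Fin d → (Fin d → ℝ) → ℝ)
    (x : Fin N → Fin d) : ℝ :=
  Real.exp (-(energyU K x)) / ∑ z : Fin N → Fin d, Real.exp (-(energyU K z))

/-- The product measure `⊗^N p` on `𝒳^N`. -/
noncomputable def productMeasure {d N : ℕ} (p : Fin d → ℝ)
    (x : Fin N → Fin d) : ℝ :=
  ∏ i, p (x i)

/-- Relative entropy of two probability vectors on `𝒳^N`
(convention `0 log 0 = 0`). -/
noncomputable def relEntN {d N : ℕ} (P Q : (Fin N → Fin d) → ℝ) : ℝ :=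
  ∑ x : Fin N → Fin d, P x * Real.log (P x / Q x)

/-- Scaled relative entropy `F̃_N(p) = (1/N) R(⊗^N p ‖ π_N)`. -/
noncomputable def tildeF {d : ℕ} (K : Fin d → (Fin d → ℝ) → ℝ) (N : ℕ)
    (p : Fin d → ℝ) : ℝ :=
  (1 / (N : ℝ)) * relEntN (productMeasure p) (gibbsMeasure (N := N) K)

/-!
With `r` the empirical measure, `U_N = N · meanEnergy K r`, so `F̃_N(p)` splits as
`∑ p log p + E_{⊗p}[meanEnergy K r] + (1/N) log Z_N`.

Under `⊗^N p` each coordinate of `r` has variance at most `1/N` around `p`, and `meanEnergy K`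
is Lipschitz on the simplex, so the middle term tends to `meanEnergy K p`.

`(1/N) log Z_N` tends to `-freeEnergy K q₀` for a minimiser `q₀` of `freeEnergy K` on the
simplex. From below this is `F̃_N(q₀) ≥ 0`. From above, `e^{-U_N(x)} ≤ e^{-N Φ(q₀)} ∏ᵢ r(x_i)`
with `Φ = freeEnergy K`; the configurations sharing an empirical measure `r` carry total
`∏ᵢ r(x_i)`-weight at most `(⊗^N r)(𝒳^N) = 1`, and there are at most `(N+1)^d` such classes.
-/

open Finset

section

variable {d N : ℕ}

lemma sum_sub_sum_le_sum_mul_log_div {ι : Type*} (s : Finset ι) {P Q : ι → ℝ}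
    (hP : ∀ i ∈ s, 0 ≤ P i) (hQ : ∀ i ∈ s, 0 < Q i) :
    ∑ i ∈ s, P i - ∑ i ∈ s, Q i ≤ ∑ i ∈ s, P i * Real.log (P i / Q i) := by
  rw [← sum_sub_distrib]
  refine sum_le_sum fun i hi => ?_
  rcases (hP i hi).eq_or_lt with h | h
  · simp [← h, (hQ i hi).le]
  · have hlog := Real.one_sub_inv_le_log_of_pos (div_pos h (hQ i hi))
    rw [inv_div] at hlog
    calc P i - Q i = P i * (1 - Q i / P i) := by field_simp
      _ ≤ P i * Real.log (P i / Q i) := mul_le_mul_of_nonneg_left hlog h.le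

lemma sum_productMeasure_mul_prod {p : Fin d → ℝ} (hp : ∑ y, p y = 1) (s : Finset (Fin N))
    (g : Fin N → Fin d → ℝ) :
    ∑ x : Fin N → Fin d, productMeasure p x * ∏ i ∈ s, g i (x i)
      = ∏ i ∈ s, ∑ y, p y * g i y := by
  classical
  have hfactor : ∀ x : Fin N → Fin d, productMeasure p x * ∏ i ∈ s, g i (x i)
      = ∏ i, p (x i) * (if i ∈ s then g i (x i) else 1) := by
    intro x
    rw [productMeasure, prod_mul_distrib, prod_ite_mem, univ_inter]
  simp_rw [hfactor, ← Fintype.prod_sum fun i y => p y * if i ∈ s then g i y else 1]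
  trans ∏ i, if i ∈ s then ∑ y, p y * g i y else 1
  · refine prod_congr rfl fun i _ => ?_
    split_ifs <;> simp [hp]
  · rw [prod_ite_mem, univ_inter]

lemma sum_productMeasure {p : Fin d → ℝ} (hp : ∑ y, p y = 1) :
    ∑ x : Fin N → Fin d, productMeasure p x = 1 := by
  simpa using sum_productMeasure_mul_prod (N := N) hp ∅ fun _ _ => 1

lemma sum_productMeasure_mul_apply {p : Fin d → ℝ} (hp : ∑ y, p y = 1) (i : Fin N)
    (f : Fin d → ℝ) :
    ∑ x : Fin N → Fin d, productMeasure p x * f (x i) = ∑ y, p y * f y := by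
  simpa using sum_productMeasure_mul_prod hp {i} fun _ => f

lemma sum_productMeasure_mul_sum_sq {p : Fin d → ℝ} (hp : ∑ y, p y = 1) {f : Fin d → ℝ}
    (hf : ∑ y, p y * f y = 0) :
    ∑ x : Fin N → Fin d, productMeasure p x * (∑ i, f (x i)) ^ 2
      = N * ∑ y, p y * f y ^ 2 := by
  have hcov : ∀ i j : Fin N, ∑ x : Fin N → Fin d, productMeasure p x * (f (x i) * f (x j))
      = if i = j then ∑ y, p y * f y ^ 2 else 0 := by
    intro i j
    split_ifs with hij
    · subst hij
      simp_rw [← sq]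
      exact sum_productMeasure_mul_apply hp i fun y => f y ^ 2
    · simpa [prod_pair hij, hf] using sum_productMeasure_mul_prod hp {i, j} fun _ => f
  simp_rw [sq, sum_mul_sum, mul_sum]
  rw [sum_comm]
  simp_rw [sum_comm (γ := Fin N → Fin d), hcov]
  simp [mul_sum, sq]

lemma productMeasure_nonneg {p : Fin d → ℝ} (hp : ∀ y, 0 ≤ p y) (x : Fin N → Fin d) :
    0 ≤ productMeasure p x :=
  prod_nonneg fun i _ => hp (x i)

lemma sum_productMeasure_mul_log {p : Fin d → ℝ} (hp : ∑ y, p y = 1) :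
    ∑ x : Fin N → Fin d, productMeasure p x * Real.log (productMeasure p x)
      = N * ∑ y, p y * Real.log (p y) := by
  have hlog : ∀ x : Fin N → Fin d, productMeasure p x * Real.log (productMeasure p x)
      = ∑ i, productMeasure p x * Real.log (p (x i)) := by
    intro x
    rw [← mul_sum]
    by_cases h : productMeasure p x = 0
    · simp [h]
    · rw [productMeasure, Real.log_prod fun i _ hi => h (prod_eq_zero (mem_univ i) hi)]
  simp_rw [hlog]
  rw [sum_comm, sum_congr rfl fun i _ => sum_productMeasure_mul_apply hp i fun y => Real.log (p y)]
  simp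

lemma sum_comp_eq_mul_sum_empMeasure (hN : N ≠ 0) (x : Fin N → Fin d) (f : Fin d → ℝ) :
    ∑ i, f (x i) = N * ∑ y, empMeasure x y * f y := by
  have hN' : (N : ℝ) ≠ 0 := Nat.cast_ne_zero.mpr hN
  simp only [empMeasure, mul_sum, ← mul_assoc, mul_one_div_cancel hN', one_mul, sum_mul,
    boole_mul]
  rw [sum_comm]
  simp

lemma empMeasure_nonneg (x : Fin N → Fin d) (y : Fin d) : 0 ≤ empMeasure x y := by
  unfold empMeasure
  positivity

lemma empMeasure_mem_stdSimplex (hN : N ≠ 0) (x : Fin N → Fin d) :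
    empMeasure x ∈ stdSimplex ℝ (Fin d) :=
  ⟨empMeasure_nonneg x, mul_left_cancel₀ (Nat.cast_ne_zero.mpr hN) <| by
    simpa using (sum_comp_eq_mul_sum_empMeasure hN x fun _ => 1).symm⟩

lemma empMeasure_apply_self_pos (x : Fin N → Fin d) (i : Fin N) : 0 < empMeasure x (x i) := by
  have hN : 0 < (N : ℝ) := by exact_mod_cast i.pos
  unfold empMeasure
  exact mul_pos (by positivity) (sum_pos' (fun j _ => by positivity) ⟨i, mem_univ i, by simp⟩)

lemma prod_empMeasure_apply_self (x : Fin N → Fin d) :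
    ∏ i, empMeasure x (x i)
      = Real.exp (N * ∑ y, empMeasure x y * Real.log (empMeasure x y)) := by
  rcases eq_or_ne N 0 with rfl | hN
  · simp
  rw [← sum_comp_eq_mul_sum_empMeasure hN, Real.exp_sum]
  exact prod_congr rfl fun i _ => (Real.exp_log (empMeasure_apply_self_pos x i)).symm

lemma card_image_empMeasure_le :
    #(univ.image (empMeasure : (Fin N → Fin d) → Fin d → ℝ)) ≤ (N + 1) ^ d := by
  classical
  let count : (Fin N → Fin d) → Fin d → Fin (N + 1) := fun x y =>
    ⟨#{i | x i = y}, Nat.lt_succ_of_le ((card_filter_le _ _).trans_eq (card_fin N))⟩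
  have hfactor : univ.image (empMeasure (N := N) (d := d))
      = (univ.image count).image fun c y => 1 / (N : ℝ) * (c y : ℕ) := by
    rw [image_image]
    congr
    funext x y
    simp [empMeasure, count]
  calc #(univ.image (empMeasure (N := N) (d := d)))
      ≤ #(univ.image count) := hfactor ▸ card_image_le
    _ ≤ Fintype.card (Fin d → Fin (N + 1)) := card_le_univ _
    _ = (N + 1) ^ d := by simp

lemma sum_apply_self_le_card_image {Ω β : Type*} [Fintype Ω] [DecidableEq β] (g : Ω → β)
    (w : β → Ω → ℝ) (hw0 : ∀ x y, 0 ≤ w (g x) y) (hw1 : ∀ x, ∑ y, w (g x) y ≤ 1) :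
    ∑ x, w (g x) x ≤ #(univ.image g) := by
  rw [← sum_fiberwise_of_maps_to fun x _ => mem_image_of_mem g (mem_univ x)]
  calc ∑ b ∈ univ.image g, ∑ x with g x = b, w (g x) x
      ≤ ∑ b ∈ univ.image g, (1 : ℝ) := by
        refine sum_le_sum fun b hb => ?_
        obtain ⟨x₀, -, rfl⟩ := mem_image.mp hb
        calc ∑ x with g x = g x₀, w (g x) x = ∑ x with g x = g x₀, w (g x₀) x :=
              sum_congr rfl fun x hx => by rw [(mem_filter.mp hx).2]
          _ ≤ ∑ x, w (g x₀) x :=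
              sum_le_sum_of_subset_of_nonneg (filter_subset _ _) fun x _ _ => hw0 x₀ x
          _ ≤ 1 := hw1 x₀
    _ = #(univ.image g) := by simp

lemma sum_prod_empMeasure_apply_self_le (hN : N ≠ 0) :
    ∑ x : Fin N → Fin d, ∏ i, empMeasure x (x i) ≤ ((N : ℝ) + 1) ^ d := by
  classical
  calc ∑ x : Fin N → Fin d, ∏ i, empMeasure x (x i)
      ≤ #(univ.image (empMeasure : (Fin N → Fin d) → Fin d → ℝ)) :=
        sum_apply_self_le_card_image empMeasure productMeasure
          (fun x => productMeasure_nonneg (empMeasure_nonneg x))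
          (fun x => (sum_productMeasure (empMeasure_mem_stdSimplex hN x).2).le)
    _ ≤ ((N : ℝ) + 1) ^ d := by exact_mod_cast card_image_empMeasure_le

noncomputable def meanEnergy (K : Fin d → (Fin d → ℝ) → ℝ) (q : Fin d → ℝ) : ℝ :=
  ∑ x, K x q * q x

noncomputable def freeEnergy (K : Fin d → (Fin d → ℝ) → ℝ) (q : Fin d → ℝ) : ℝ :=
  ∑ x, q x * Real.log (q x) + meanEnergy K q

noncomputable def partitionFn (K : Fin d → (Fin d → ℝ) → ℝ) (N : ℕ) : ℝ :=
  ∑ z : Fin N → Fin d, Real.exp (-(energyU K z))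

noncomputable def expectedMeanEnergy (K : Fin d → (Fin d → ℝ) → ℝ) (N : ℕ)
    (q : Fin d → ℝ) : ℝ :=
  ∑ x : Fin N → Fin d, productMeasure q x * meanEnergy K (empMeasure x)

variable (K : Fin d → (Fin d → ℝ) → ℝ)

lemma energyU_eq_mul_meanEnergy (hN : N ≠ 0) (x : Fin N → Fin d) :
    energyU K x = N * meanEnergy K (empMeasure x) := by
  rw [energyU, sum_comp_eq_mul_sum_empMeasure hN x fun y => K y (empMeasure x), meanEnergy]
  simp_rw [mul_comm (empMeasure x _)]

lemma partitionFn_pos (x : Fin N → Fin d) : 0 < partitionFn K N :=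
  sum_pos' (fun _ _ => (Real.exp_pos _).le) ⟨x, mem_univ x, Real.exp_pos _⟩

lemma gibbsMeasure_pos (x : Fin N → Fin d) : 0 < gibbsMeasure K x :=
  div_pos (Real.exp_pos _) (partitionFn_pos K x)

lemma sum_gibbsMeasure_le_one : ∑ x : Fin N → Fin d, gibbsMeasure K x ≤ 1 := by
  unfold gibbsMeasure
  rw [← sum_div]
  exact div_self_le_one _

lemma tildeF_eq (hN : N ≠ 0) {p : Fin d → ℝ} (hp : ∑ y, p y = 1) :
    tildeF K N p = ∑ y, p y * Real.log (p y) + expectedMeanEnergy K N p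
      + Real.log (partitionFn K N) / N := by
  have hlog : ∀ x : Fin N → Fin d,
      productMeasure p x * Real.log (productMeasure p x / gibbsMeasure K x)
        = productMeasure p x * Real.log (productMeasure p x)
          + N * (productMeasure p x * meanEnergy K (empMeasure x))
          + productMeasure p x * Real.log (partitionFn K N) := by
    intro x
    by_cases h : productMeasure p x = 0
    · simp [h]
    rw [Real.log_div h (gibbsMeasure_pos K x).ne',
      show gibbsMeasure K x = Real.exp (-(energyU K x)) / partitionFn K N from rfl,
      Real.log_div (Real.exp_ne_zero _) (partitionFn_pos K x).ne', Real.log_exp,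
      energyU_eq_mul_meanEnergy K hN]
    ring
  have hN' : (N : ℝ) ≠ 0 := Nat.cast_ne_zero.mpr hN
  rw [tildeF, relEntN]
  simp_rw [hlog]
  rw [sum_add_distrib, sum_add_distrib, sum_productMeasure_mul_log hp, ← mul_sum, ← sum_mul,
    sum_productMeasure hp, expectedMeanEnergy]
  field_simp

lemma tildeF_nonneg {p : Fin d → ℝ} (hp : p ∈ stdSimplex ℝ (Fin d)) : 0 ≤ tildeF K N p := by
  refine mul_nonneg (by positivity) ?_
  have h := sum_sub_sum_le_sum_mul_log_div (univ : Finset (Fin N → Fin d))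
    (fun x _ => productMeasure_nonneg hp.1 x) (fun x _ => gibbsMeasure_pos K x)
  rw [sum_productMeasure hp.2] at h
  exact (sub_nonneg.mpr (sum_gibbsMeasure_le_one K)).trans h

lemma log_partitionFn_le [Nonempty (Fin d)] (hN : N ≠ 0) {m : ℝ}
    (hm : ∀ q ∈ stdSimplex ℝ (Fin d), m ≤ freeEnergy K q) :
    Real.log (partitionFn K N) ≤ d * Real.log (N + 1) - N * m := by
  have hterm : ∀ x : Fin N → Fin d,
      Real.exp (-(energyU K x)) ≤ Real.exp (-(N * m)) * ∏ i, empMeasure x (x i) := by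
    intro x
    rw [energyU_eq_mul_meanEnergy K hN, prod_empMeasure_apply_self, ← Real.exp_add,
      Real.exp_le_exp]
    have := mul_le_mul_of_nonneg_left (hm _ (empMeasure_mem_stdSimplex hN x))
      (N.cast_nonneg (α := ℝ))
    rw [freeEnergy] at this
    linarith
  have hZ : partitionFn K N ≤ Real.exp (-(N * m)) * ((N : ℝ) + 1) ^ d :=
    calc partitionFn K N
        ≤ ∑ x : Fin N → Fin d, Real.exp (-(N * m)) * ∏ i, empMeasure x (x i) :=
          sum_le_sum fun x _ => hterm x
      _ ≤ Real.exp (-(N * m)) * ((N : ℝ) + 1) ^ d := by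
          rw [← mul_sum]
          exact mul_le_mul_of_nonneg_left (sum_prod_empMeasure_apply_self_le hN)
            (Real.exp_nonneg _)
  calc Real.log (partitionFn K N)
      ≤ Real.log (Real.exp (-(N * m)) * ((N : ℝ) + 1) ^ d) :=
        Real.log_le_log (partitionFn_pos K fun _ => Classical.arbitrary _) hZ
    _ = d * Real.log (N + 1) - N * m := by
        rw [Real.log_mul (Real.exp_ne_zero _) (by positivity), Real.log_exp, Real.log_pow]
        ring

lemma sum_mul_abs_le_sqrt_sum_mul_sq {ι : Type*} [Fintype ι] {P : ι → ℝ} (hP0 : ∀ i, 0 ≤ P i)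
    (hP1 : ∑ i, P i = 1) (Δ : ι → ℝ) :
    ∑ i, P i * |Δ i| ≤ Real.sqrt (∑ i, P i * Δ i ^ 2) := by
  refine Real.le_sqrt_of_sq_le ?_
  have h := sum_sq_le_sum_mul_sum_of_sq_le_mul univ (r := fun i => P i * |Δ i|)
    (fun i _ => hP0 i) (fun i _ => mul_nonneg (hP0 i) (sq_nonneg (Δ i)))
    (fun i _ => le_of_eq (by rw [mul_pow, sq_abs]; ring))
  rwa [hP1, one_mul] at h

lemma sum_productMeasure_mul_sq_empMeasure_sub_le {q : Fin d → ℝ}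
    (hq : q ∈ stdSimplex ℝ (Fin d)) (hN : N ≠ 0) (z : Fin d) :
    ∑ x : Fin N → Fin d, productMeasure q x * (empMeasure x z - q z) ^ 2 ≤ 1 / N := by
  have hN' : (0 : ℝ) < N := by positivity
  have hqz : q z ≤ 1 := hq.2 ▸ single_le_sum (fun y _ => hq.1 y) (mem_univ z)
  set a : Fin d → ℝ := fun y => (if y = z then 1 else 0) - q z
  have hcentered : ∑ y, q y * a y = 0 := by simp [a, mul_sub, sum_sub_distrib, ← sum_mul, hq.2]
  have hsq : ∀ y, a y ^ 2 ≤ 1 := fun y => by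
    rw [sq_le_one_iff_abs_le_one, abs_le]
    constructor <;> simp only [a] <;> split_ifs <;> linarith [hq.1 z]
  have hdev : ∀ x : Fin N → Fin d, empMeasure x z - q z = (∑ i, a (x i)) / N := fun x => by
    rw [sum_comp_eq_mul_sum_empMeasure hN]
    simp [a, mul_sub, sum_sub_distrib, ← sum_mul, (empMeasure_mem_stdSimplex hN x).2]
    field_simp
  simp_rw [hdev, div_pow, mul_div_assoc', ← sum_div,
    sum_productMeasure_mul_sum_sq hq.2 hcentered]
  calc (N * ∑ y, q y * a y ^ 2) / (N : ℝ) ^ 2 ≤ (N * ∑ y, q y * 1) / (N : ℝ) ^ 2 := by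
        gcongr with y
        exacts [hq.1 y, hsq y]
    _ = 1 / (N : ℝ) := by
        simp_rw [mul_one, hq.2]
        field_simp

lemma sum_productMeasure_mul_dist_empMeasure_le {q : Fin d → ℝ}
    (hq : q ∈ stdSimplex ℝ (Fin d)) (hN : N ≠ 0) :
    ∑ x : Fin N → Fin d, productMeasure q x * dist (empMeasure x) q
      ≤ d * Real.sqrt (1 / N) := by
  have hdist : ∀ x : Fin N → Fin d, dist (empMeasure x) q ≤ ∑ z, |empMeasure x z - q z| :=
    fun x => (dist_pi_le_iff (sum_nonneg fun _ _ => abs_nonneg _)).mpr fun z =>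
      single_le_sum (f := fun z => |empMeasure x z - q z|) (fun _ _ => abs_nonneg _) (mem_univ z)
  calc ∑ x : Fin N → Fin d, productMeasure q x * dist (empMeasure x) q
      ≤ ∑ x : Fin N → Fin d, productMeasure q x * ∑ z, |empMeasure x z - q z| :=
        sum_le_sum fun x _ => mul_le_mul_of_nonneg_left (hdist x) (productMeasure_nonneg hq.1 x)
    _ = ∑ z, ∑ x : Fin N → Fin d, productMeasure q x * |empMeasure x z - q z| := by
        simp_rw [mul_sum]
        exact sum_comm
    _ ≤ ∑ _z : Fin d, Real.sqrt (1 / N) := by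
        refine sum_le_sum fun z _ => ?_
        refine (sum_mul_abs_le_sqrt_sum_mul_sq (productMeasure_nonneg hq.1)
          (sum_productMeasure hq.2) _).trans ?_
        exact Real.sqrt_le_sqrt (sum_productMeasure_mul_sq_empMeasure_sub_le hq hN z)
    _ = d * Real.sqrt (1 / N) := by simp

lemma exists_lipschitzOnWith_meanEnergy (hK : ∀ y, ContDiff ℝ 1 (K y)) :
    ∃ L, LipschitzOnWith L (meanEnergy K) (stdSimplex ℝ (Fin d)) := by
  have hsmooth : ContDiff ℝ 1 (meanEnergy K) := by
    unfold meanEnergy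
    exact ContDiff.sum fun y _ => (hK y).mul (contDiff_apply ℝ ℝ y)
  exact hsmooth.locallyLipschitz.locallyLipschitzOn.exists_lipschitzOnWith_of_compact
    (isCompact_stdSimplex ℝ (Fin d))

lemma tendsto_expectedMeanEnergy (hK : ∀ y, ContDiff ℝ 1 (K y)) {q : Fin d → ℝ}
    (hq : q ∈ stdSimplex ℝ (Fin d)) :
    Tendsto (fun N => expectedMeanEnergy K N q) atTop (nhds (meanEnergy K q)) := by
  obtain ⟨L, hL⟩ := exists_lipschitzOnWith_meanEnergy K hK
  have hbound : ∀ N ≠ 0, dist (expectedMeanEnergy K N q) (meanEnergy K q)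
      ≤ L * (d * Real.sqrt (1 / N)) := fun N hN => by
    have hP := productMeasure_nonneg (N := N) hq.1
    calc dist (expectedMeanEnergy K N q) (meanEnergy K q)
        = |∑ x : Fin N → Fin d,
            productMeasure q x * (meanEnergy K (empMeasure x) - meanEnergy K q)| := by
          simp [Real.dist_eq, expectedMeanEnergy, mul_sub, sum_sub_distrib, ← sum_mul,
            sum_productMeasure hq.2]
      _ ≤ ∑ x : Fin N → Fin d, productMeasure q x * (L * dist (empMeasure x) q) := by
          refine (abs_sum_le_sum_abs _ _).trans (sum_le_sum fun x _ => ?_)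
          rw [abs_mul, abs_of_nonneg (hP x), ← Real.dist_eq]
          exact mul_le_mul_of_nonneg_left
            (hL.dist_le_mul _ (empMeasure_mem_stdSimplex hN x) _ hq) (hP x)
      _ ≤ L * (d * Real.sqrt (1 / N)) := by
          simp_rw [mul_left_comm _ (L : ℝ), ← mul_sum]
          exact mul_le_mul_of_nonneg_left (sum_productMeasure_mul_dist_empMeasure_le hq hN)
            L.coe_nonneg
  have hrate : Tendsto (fun N : ℕ => L * (d * Real.sqrt (1 / N))) atTop (nhds 0) := by
    simpa using ((tendsto_one_div_atTop_nhds_zero_nat.sqrt).const_mul (d : ℝ)).const_mul (L : ℝ)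
  exact tendsto_iff_dist_tendsto_zero.mpr <|
    squeeze_zero' (Eventually.of_forall fun _ => dist_nonneg)
      ((eventually_ne_atTop 0).mono hbound) hrate

lemma continuous_freeEnergy (hK : ∀ y, Continuous (K y)) : Continuous (freeEnergy K) := by
  unfold freeEnergy meanEnergy
  fun_prop (disch := exact hK)

lemma tendsto_log_add_one_div_atTop :
    Tendsto (fun N : ℕ => Real.log (N + 1) / N) atTop (nhds 0) := by
  have h := (Real.tendsto_pow_log_div_mul_add_atTop 1 (-1) 1 one_ne_zero).comp
    (tendsto_atTop_add_const_right _ 1 tendsto_natCast_atTop_atTop)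
  refine h.congr fun N => ?_
  simp

lemma tendsto_log_partitionFn_div (hK : ∀ y, ContDiff ℝ 1 (K y)) {q₀ : Fin d → ℝ}
    (hq₀ : q₀ ∈ stdSimplex ℝ (Fin d))
    (hmin : ∀ q ∈ stdSimplex ℝ (Fin d), freeEnergy K q₀ ≤ freeEnergy K q) :
    Tendsto (fun N => Real.log (partitionFn K N) / N) atTop (nhds (-freeEnergy K q₀)) := by
  have : Nonempty (Fin d) := by
    by_contra h
    simpa [not_nonempty_iff.mp h] using hq₀.2
  have hlower :
      Tendsto (fun N => -(∑ y, q₀ y * Real.log (q₀ y) + expectedMeanEnergy K N q₀)) atTop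
        (nhds (-freeEnergy K q₀)) :=
    (tendsto_const_nhds.add (tendsto_expectedMeanEnergy K hK hq₀)).neg
  have hupper : Tendsto (fun N : ℕ => d * (Real.log (N + 1) / N) - freeEnergy K q₀)
      atTop (nhds (-freeEnergy K q₀)) := by
    simpa using (tendsto_log_add_one_div_atTop.const_mul (d : ℝ)).sub_const (freeEnergy K q₀)
  refine tendsto_of_tendsto_of_tendsto_of_le_of_le' hlower hupper ?_ ?_ <;>
    filter_upwards [eventually_ne_atTop 0] with N hN
  · have := tildeF_nonneg K (N := N) hq₀
    rw [tildeF_eq K hN hq₀.2] at this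
    linarith
  · have hN' : (0 : ℝ) < N := by positivity
    rw [div_le_iff₀ hN']
    have := log_partitionFn_le K hN hmin
    linarith [show (d * (Real.log (N + 1) / N) - freeEnergy K q₀) * N
      = d * Real.log (N + 1) - N * freeEnergy K q₀ by field_simp]

end

theorem gibbs_relative_entropy_limit_general
    (d : ℕ)
    (K : Fin d → (Fin d → ℝ) → ℝ)
    (hK : ∀ x : Fin d, ContDiff ℝ 2 (K x))
    (p : Fin d → ℝ) (hp : p ∈ stdSimplex ℝ (Fin d)) :
    Tendsto (fun N : ℕ => tildeF K N p) atTop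
      (nhds ((∑ x, (K x p + Real.log (p x)) * p x)
        - sInf { v : ℝ | ∃ q ∈ stdSimplex ℝ (Fin d),
            v = ∑ x, q x * Real.log (q x) + ∑ x, K x q * q x })) := by
  have hK₁ : ∀ x, ContDiff ℝ 1 (K x) := fun x => (hK x).of_le (by norm_num)
  obtain ⟨q₀, hq₀, hmin⟩ := (isCompact_stdSimplex ℝ (Fin d)).exists_isMinOn ⟨p, hp⟩
    (continuous_freeEnergy K fun x => (hK₁ x).continuous).continuousOn
  have hsInf : sInf { v : ℝ | ∃ q ∈ stdSimplex ℝ (Fin d),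
      v = ∑ x, q x * Real.log (q x) + ∑ x, K x q * q x } = freeEnergy K q₀ :=
    IsLeast.csInf_eq ⟨⟨q₀, hq₀, rfl⟩, by rintro _ ⟨q, hq, rfl⟩; exact hmin hq⟩
  have hlimit : ∑ x, (K x p + Real.log (p x)) * p x - freeEnergy K q₀
      = ∑ y, p y * Real.log (p y) + meanEnergy K p + -freeEnergy K q₀ := by
    simp only [meanEnergy, add_mul, sum_add_distrib, mul_comm (Real.log _)]
    ring
  rw [hsInf, hlimit]
  refine ((tendsto_const_nhds.add (tendsto_expectedMeanEnergy K hK₁ hp)).add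
    (tendsto_log_partitionFn_div K hK₁ hq₀ fun q hq => hmin hq)).congr' ?_
  filter_upwards [eventually_ne_atTop 0] with N hN
  exact (tildeF_eq K hN hp.2).symm

/-- For Gibbs-type systems, for every `p ∈ 𝒫(𝒳)`,
`lim_{N→∞} F̃_N(p) = ∑_x (K(x,p) + log p_x) p_x − C`, where
`C = inf_{q ∈ 𝒫(𝒳)} {∑ q_x log q_x + ∑ K(x,q) q_x}` is a finite constant
independent of `p`. -/
theorem gibbs_relative_entropy_limit
    (d : ℕ) (hd : 2 ≤ d)
    (K : Fin d → (Fin d → ℝ) → ℝ)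
    (hK : ∀ x : Fin d, ContDiff ℝ 2 (K x))
    (p : Fin d → ℝ) (hp : p ∈ stdSimplex ℝ (Fin d)) :
    Tendsto (fun N : ℕ => tildeF K N p) atTop
      (nhds ((∑ x, (K x p + Real.log (p x)) * p x)
        - sInf { v : ℝ | ∃ q ∈ stdSimplex ℝ (Fin d),
            v = ∑ x, q x * Real.log (q x) + ∑ x, K x q * q x })) :=
  gibbs_relative_entropy_limit_general d K hK p hp
end
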